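/- Let Γ be a finite N-player game, a* a strict Nash equilibrium of Γ with minimum payoff margin c > 0, and let γ > 0 be a step-size. Let (y_n), (p_n) in ∏_i ℝ^{A_i} be generated by the FTXL algorithm with logit best responses and full-information feedback: p_1 = 0, and for all n ≥ 1, p_{n+1} = p_n + γ·v(x_n) and y_{n+1} = y_n + γ·p_{n+1}, where x_n = Λ(y_n). Then there exists M > 0, depending only on Γ and a*, such that whenever y_{i,a,1} − y_{i,a*_i,1} < −M for every player i and every action a ≠ a*_i, the sequence x_n converges to x*, and there is a constant C > 0 depending only on the initialization such that ‖x_T − x*‖∞ ≤ exp(C − c·γ²·T(T−1)/2) for every T ≥ 1. -/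
import Mathlib

open Filter

/-- The logit (softmax) choice map. -/
noncomputable def logit {α : Type*} [Fintype α] (y : α → ℝ) : α → ℝ :=
  fun a => Real.exp (y a) / ∑ b, Real.exp (y b)

/-- Mixed extension of a payoff function: `∑_a (∏_j x_j(a_j)) u(a)`. -/
def mixedPayoff {N : ℕ} {A : Fin N → Type*} [∀ j, Fintype (A j)]
    (ui : (∀ j, A j) → ℝ) (x : ∀ j, A j → ℝ) : ℝ :=
  ∑ a : ∀ j, A j, (∏ j, x j (a j)) * ui a

/-- Payoff vector `v_{i,aᵢ}(x) = u_i(aᵢ ; x₋ᵢ)`: player `i` plays the point mass at `aᵢ`. -/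
def payVec {N : ℕ} {A : Fin N → Type*} [∀ j, Fintype (A j)] [∀ j, DecidableEq (A j)]
    (u : ∀ _ : Fin N, (∀ j, A j) → ℝ) (i : Fin N) (ai : A i) (x : ∀ j, A j → ℝ) : ℝ :=
  mixedPayoff (u i) (Function.update x i (fun b => if b = ai then (1 : ℝ) else 0))

lemma logit_nonneg {α : Type*} [Fintype α] [Nonempty α] (y : α → ℝ) (a : α) :
    0 ≤ logit y a := by
  unfold logit
  positivity

lemma sum_exp_pos {α : Type*} [Fintype α] [Nonempty α] (y : α → ℝ) :
    0 < ∑ b, Real.exp (y b) :=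
  Finset.sum_pos (fun b _ => Real.exp_pos _) Finset.univ_nonempty

lemma logit_sum_one {α : Type*} [Fintype α] [Nonempty α] (y : α → ℝ) :
    ∑ a, logit y a = 1 := by
  unfold logit
  rw [← Finset.sum_div, div_self (sum_exp_pos y).ne']

lemma logit_le_exp_sub {α : Type*} [Fintype α] [Nonempty α] (y : α → ℝ) (a b : α) :
    logit y a ≤ Real.exp (y a - y b) := by
  unfold logit
  rw [Real.exp_sub]
  apply div_le_div_of_nonneg_left (Real.exp_pos _).le (Real.exp_pos _)
  exact Finset.single_le_sum (fun c _ => (Real.exp_pos _).le) (Finset.mem_univ b)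

lemma logit_le_one {α : Type*} [Fintype α] [Nonempty α] (y : α → ℝ) (a : α) :
    logit y a ≤ 1 := by
  unfold logit
  rw [div_le_one (sum_exp_pos y)]
  exact Finset.single_le_sum (fun c _ => (Real.exp_pos _).le) (Finset.mem_univ a)

lemma logit_eq_one_sub {α : Type*} [Fintype α] [Nonempty α] [DecidableEq α] (y : α → ℝ) (a : α) :
    logit y a = 1 - ∑ b ∈ Finset.univ.erase a, logit y b := by
  have := logit_sum_one y
  rw [← Finset.add_sum_erase _ _ (Finset.mem_univ a)] at this
  linarith

lemma mixedPayoff_point {N : ℕ} {A : Fin N → Type*} [∀ j, Fintype (A j)]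
    [∀ j, DecidableEq (A j)] (f : (∀ j, A j) → ℝ) (b : ∀ j, A j) :
    mixedPayoff f (fun j c => if c = b j then (1 : ℝ) else 0) = f b := by
  unfold mixedPayoff
  rw [Finset.sum_eq_single b]
  · simp
  · intro a _ hab
    have : ∃ j, a j ≠ b j := by
      by_contra h
      push_neg at h
      exact hab (funext h)
    obtain ⟨j, hj⟩ := this
    rw [Finset.prod_eq_zero (Finset.mem_univ j) (by simp [hj]), zero_mul]
  · intro h; exact absurd (Finset.mem_univ b) h

lemma payVec_point {N : ℕ} {A : Fin N → Type*} [∀ j, Fintype (A j)]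
    [∀ j, DecidableEq (A j)]
    (u : ∀ _ : Fin N, (∀ j, A j) → ℝ) (i : Fin N) (ai : A i) (aStar : ∀ j, A j) :
    payVec u i ai (fun j c => if c = aStar j then (1 : ℝ) else 0)
      = u i (Function.update aStar i ai) := by
  unfold payVec
  rw [← mixedPayoff_point (u i) (Function.update aStar i ai)]
  congr 1
  funext j c
  by_cases h : j = i
  · subst h; simp
  · simp [Function.update_of_ne h]

lemma payVec_continuous {N : ℕ} {A : Fin N → Type*} [∀ j, Fintype (A j)]
    [∀ j, DecidableEq (A j)]
    (u : ∀ _ : Fin N, (∀ j, A j) → ℝ) (i : Fin N) (ai : A i) :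
    Continuous fun x : ∀ j, A j → ℝ => payVec u i ai x := by
  unfold payVec mixedPayoff
  apply continuous_finset_sum
  intro a _
  apply Continuous.mul _ continuous_const
  apply continuous_finset_prod
  intro j _
  by_cases h : j = i
  · subst h; simp only [Function.update_self]; exact continuous_const
  · simp only [Function.update_of_ne h]
    exact (continuous_apply (a j)).comp (continuous_apply j)

set_option maxHeartbeats 1600000 in
/-- Superlinear convergence of the discrete FTXL algorithm with logit
best responses and full-information feedback to a strict Nash equilibrium. -/
theorem ftxl_discrete_full_information
    {N : ℕ} {A : Fin N → Type*} [∀ j, Fintype (A j)] [∀ j, Nonempty (A j)]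
    [∀ j, DecidableEq (A j)]
    (u : ∀ _ : Fin N, (∀ j, A j) → ℝ) (aStar : ∀ i, A i)
    (hNE : ∀ (i : Fin N) (a : A i), a ≠ aStar i →
      u i (Function.update aStar i a) < u i aStar)
    (c : ℝ) (hc : 0 < c)
    (hmargin : IsLeast {d : ℝ | ∃ i : Fin N, ∃ a : A i, a ≠ aStar i ∧
      d = u i aStar - u i (Function.update aStar i a)} (2 * c))
    (γ : ℝ) (hγ : 0 < γ) :
    ∃ M > (0 : ℝ), ∀ y p : ℕ → ∀ i, A i → ℝ,
      (∀ (i : Fin N) (a : A i), p 1 i a = 0) →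
      (∀ n ≥ 1, ∀ (i : Fin N) (a : A i),
        p (n + 1) i a = p n i a + γ * payVec u i a (fun j => logit (y n j)) ∧
        y (n + 1) i a = y n i a + γ * p (n + 1) i a) →
      (∀ (i : Fin N) (a : A i), a ≠ aStar i → y 1 i a - y 1 i (aStar i) < -M) →
      (∀ (i : Fin N) (a : A i),
        Tendsto (fun n => logit (y n i) a) atTop
          (nhds (if a = aStar i then (1 : ℝ) else 0))) ∧
      ∃ C > (0 : ℝ), ∀ T : ℕ, 1 ≤ T → ∀ (i : Fin N) (a : A i),
        |logit (y T i) a - (if a = aStar i then (1 : ℝ) else 0)| ≤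
          Real.exp (C - c * γ ^ 2 * ((T : ℝ) * ((T : ℝ) - 1)) / 2) := by
  classical
  set xstar : ∀ j, A j → ℝ := fun j c => if c = aStar j then (1 : ℝ) else 0 with hxstar
  -- margin bound at the equilibrium point
  have hFst : ∀ (i : Fin N) (a : A i), a ≠ aStar i →
      payVec u i a xstar - payVec u i (aStar i) xstar ≤ -(2 * c) := by
    intro i a h
    have hmem := hmargin.2 (show (u i aStar - u i (Function.update aStar i a)) ∈ _ from
      ⟨i, a, h, rfl⟩)
    rw [hxstar, payVec_point, payVec_point, Function.update_eq_self]
    linarith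
  -- a neighborhood of xstar where payoff differences are below -c
  have hev : ∀ᶠ x : (∀ j, A j → ℝ) in nhds xstar, ∀ (i : Fin N) (a : A i), a ≠ aStar i →
      payVec u i a x - payVec u i (aStar i) x < -c := by
    rw [eventually_all]
    intro i
    rw [eventually_all]
    intro a
    rcases eq_or_ne a (aStar i) with h | h
    · exact Eventually.of_forall (fun x hne => absurd h hne)
    · have hcont : ContinuousAt
          (fun x : ∀ j, A j → ℝ => payVec u i a x - payVec u i (aStar i) x) xstar :=
        ((payVec_continuous u i a).sub (payVec_continuous u i (aStar i))).continuousAt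
      have hmem := hcont (Iio_mem_nhds
        (show payVec u i a xstar - payVec u i (aStar i) xstar < -c by
          have := hFst i a h; linarith))
      filter_upwards [hmem] with x hx _
      exact hx
  obtain ⟨δ, hδ, hball⟩ := Metric.eventually_nhds_iff.mp hev
  set K : ℝ := (∑ j, (Fintype.card (A j) : ℝ)) + 1 with hK
  have hK1 : (1 : ℝ) ≤ K := by
    have : (0 : ℝ) ≤ ∑ j, (Fintype.card (A j) : ℝ) := by positivity
    rw [hK]; linarith
  have hKcard : ∀ j, (Fintype.card (A j) : ℝ) ≤ K := by
    intro j
    have := Finset.single_le_sum (f := fun j => (Fintype.card (A j) : ℝ))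
      (fun j _ => by positivity) (Finset.mem_univ j)
    rw [hK]; linarith
  set M : ℝ := max 1 (Real.log (K / δ) + 1) with hMdef
  have hM : 0 < M := lt_of_lt_of_le one_pos (le_max_left _ _)
  have hexpM : K * Real.exp (-M) < δ := by
    have h1 : Real.exp (-M) ≤ Real.exp (-(Real.log (K / δ) + 1)) := by
      apply Real.exp_le_exp.mpr
      have := le_max_right 1 (Real.log (K / δ) + 1)
      rw [hMdef]; linarith
    have h2 : Real.exp (-(Real.log (K / δ) + 1)) = (δ / K) * Real.exp (-1) := by
      rw [neg_add, Real.exp_add, Real.exp_neg, Real.exp_log (by positivity : (0:ℝ) < K / δ)]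
      rw [inv_div]
    have he1 : Real.exp (-1) < 1 := by
      calc Real.exp (-1) < Real.exp 0 := Real.exp_lt_exp.mpr (by norm_num)
        _ = 1 := Real.exp_zero
    have hKpos : (0 : ℝ) < K := by linarith
    calc K * Real.exp (-M) ≤ K * ((δ / K) * Real.exp (-1)) := by
          apply mul_le_mul_of_nonneg_left _ hKpos.le
          rw [← h2]; exact h1
      _ = δ * Real.exp (-1) := by field_simp
      _ < δ := by nlinarith [Real.exp_pos (-1)]
  refine ⟨M, hM, ?_⟩
  intro y p hp1 hrec hinit
  -- the key invariant
  have key : ∀ n, 1 ≤ n → ∀ (i : Fin N) (a : A i), a ≠ aStar i →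
      y n i a - y n i (aStar i) ≤ -M - c * γ ^ 2 * (((n : ℝ) - 1) * (n : ℝ)) / 2 ∧
      p n i a - p n i (aStar i) ≤ -(c * γ) * ((n : ℝ) - 1) := by
    intro n hn
    induction n, hn using Nat.le_induction with
    | base =>
      intro i a ha
      constructor
      · have := hinit i a ha
        push_cast
        norm_num
        linarith
      · rw [hp1, hp1]
        push_cast
        norm_num
    | succ n hn ih =>
      have h1n : (1 : ℝ) ≤ (n : ℝ) := by exact_mod_cast hn
      have hzM : ∀ (j : Fin N) (b : A j), b ≠ aStar j →
          y n j b - y n j (aStar j) ≤ -M := by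
        intro j b hb
        have h := (ih j b hb).1
        have hq : (0 : ℝ) ≤ c * γ ^ 2 * (((n : ℝ) - 1) * (n : ℝ)) / 2 := by
          have : (0 : ℝ) ≤ ((n : ℝ) - 1) * (n : ℝ) :=
            mul_nonneg (by linarith) (by linarith)
          have : (0 : ℝ) ≤ c * γ ^ 2 * (((n : ℝ) - 1) * (n : ℝ)) :=
            mul_nonneg (by positivity) this
          linarith
        linarith
      have hdist : dist (fun j => logit (y n j)) xstar < δ := by
        rw [dist_pi_lt_iff hδ]
        intro j
        rw [dist_pi_lt_iff hδ]
        intro b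
        rw [Real.dist_eq]
        have hexpM1 : Real.exp (-M) ≤ K * Real.exp (-M) := by
          nlinarith [Real.exp_pos (-M)]
        rcases eq_or_ne b (aStar j) with hb | hb
        · subst hb
          simp only [hxstar, if_pos rfl]
          rw [abs_sub_comm, abs_of_nonneg (by linarith [logit_le_one (y n j) (aStar j)])]
          have hsum : (1 : ℝ) - logit (y n j) (aStar j)
              = ∑ b ∈ Finset.univ.erase (aStar j), logit (y n j) b := by
            rw [logit_eq_one_sub (y n j) (aStar j)]; ring
          rw [hsum]
          have hbd : ∀ b ∈ Finset.univ.erase (aStar j),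
              logit (y n j) b ≤ Real.exp (-M) := by
            intro b hbm
            have hbne := Finset.ne_of_mem_erase hbm
            calc logit (y n j) b ≤ Real.exp (y n j b - y n j (aStar j)) :=
                  logit_le_exp_sub _ _ _
              _ ≤ Real.exp (-M) := Real.exp_le_exp.mpr (hzM j b hbne)
          have hcard : ((Finset.univ.erase (aStar j)).card : ℝ) ≤ K := by
            have h1 : (Finset.univ.erase (aStar j)).card ≤ Fintype.card (A j) :=
              Finset.card_le_card (Finset.erase_subset _ _) |>.trans (le_of_eq rfl)
            calc ((Finset.univ.erase (aStar j)).card : ℝ)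
                ≤ (Fintype.card (A j) : ℝ) := by exact_mod_cast h1
              _ ≤ K := hKcard j
          calc ∑ b ∈ Finset.univ.erase (aStar j), logit (y n j) b
              ≤ ((Finset.univ.erase (aStar j)).card : ℝ) * Real.exp (-M) := by
                simpa [nsmul_eq_mul] using
                  Finset.sum_le_card_nsmul _ _ (Real.exp (-M)) hbd
            _ ≤ K * Real.exp (-M) :=
                mul_le_mul_of_nonneg_right hcard (Real.exp_pos _).le
            _ < δ := hexpM
        · simp only [hxstar, if_neg hb, sub_zero]
          rw [abs_of_nonneg (logit_nonneg _ _)]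
          calc logit (y n j) b ≤ Real.exp (y n j b - y n j (aStar j)) :=
                logit_le_exp_sub _ _ _
            _ ≤ Real.exp (-M) := Real.exp_le_exp.mpr (hzM j b hb)
            _ < δ := lt_of_le_of_lt hexpM1 hexpM
      have hF := hball hdist
      intro i a ha
      obtain ⟨hz, hpb⟩ := ih i a ha
      obtain ⟨hpeq, hyeq⟩ := hrec n hn i a
      obtain ⟨hpeq', hyeq'⟩ := hrec n hn i (aStar i)
      have hFia := hF i a ha
      have hpnew : p (n + 1) i a - p (n + 1) i (aStar i) ≤ -(c * γ) * (n : ℝ) := by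
        rw [hpeq, hpeq']
        have hmul : γ * (payVec u i a (fun j => logit (y n j))
            - payVec u i (aStar i) (fun j => logit (y n j))) ≤ γ * (-c) :=
          mul_le_mul_of_nonneg_left hFia.le hγ.le
        nlinarith [hpb]
      constructor
      · rw [hyeq, hyeq']
        have hmul : γ * (p (n + 1) i a - p (n + 1) i (aStar i))
            ≤ γ * (-(c * γ) * (n : ℝ)) := mul_le_mul_of_nonneg_left hpnew hγ.le
        push_cast
        nlinarith [hz]
      · push_cast
        calc p (n + 1) i a - p (n + 1) i (aStar i) ≤ -(c * γ) * (n : ℝ) := hpnew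
          _ = -(c * γ) * ((n : ℝ) + 1 - 1) := by ring
  -- the decaying upper bound
  have haux0 : ∀ (i : Fin N) (a : A i), a ≠ aStar i →
      Tendsto (fun n => logit (y n i) a) atTop (nhds 0) := by
    intro i a ha
    have hbnd : Tendsto (fun n : ℕ =>
        Real.exp (-M - c * γ ^ 2 * (((n : ℝ) - 1) * (n : ℝ)) / 2)) atTop (nhds 0) := by
      apply Real.tendsto_exp_atBot.comp
      have h1 : Tendsto (fun n : ℕ => ((n : ℝ) - 1)) atTop atTop :=
        (tendsto_atTop_add_const_right atTop (-1) tendsto_natCast_atTop_atTop).congr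
          (fun n => by ring)
      have h2 : Tendsto (fun n : ℕ => ((n : ℝ) - 1) * (n : ℝ)) atTop atTop := by
        apply tendsto_atTop_mono' atTop _ h1
        filter_upwards [eventually_ge_atTop 1] with n hn
        have h1n : (1 : ℝ) ≤ (n : ℝ) := by exact_mod_cast hn
        nlinarith
      have h4 : Tendsto (fun n : ℕ => (c * γ ^ 2 / 2) * (((n : ℝ) - 1) * (n : ℝ)))
          atTop atTop := h2.const_mul_atTop (by positivity)
      have h5 := tendsto_neg_atTop_atBot.comp h4
      have h6 := tendsto_atBot_add_const_left atTop (-M) h5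
      exact h6.congr (fun n => by simp [Function.comp]; ring)
    apply tendsto_of_tendsto_of_tendsto_of_le_of_le' tendsto_const_nhds hbnd
    · exact Eventually.of_forall (fun n => logit_nonneg _ _)
    · filter_upwards [eventually_ge_atTop 1] with n hn
      have hz := (key n hn i a ha).1
      calc logit (y n i) a ≤ Real.exp (y n i a - y n i (aStar i)) := logit_le_exp_sub _ _ _
        _ ≤ Real.exp (-M - c * γ ^ 2 * (((n : ℝ) - 1) * (n : ℝ)) / 2) :=
            Real.exp_le_exp.mpr hz
  constructor
  · intro i a
    rcases eq_or_ne a (aStar i) with h | h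
    · subst h
      rw [if_pos rfl]
      have hsum : Tendsto (fun n => ∑ b ∈ Finset.univ.erase (aStar i), logit (y n i) b)
          atTop (nhds 0) := by
        have := tendsto_finset_sum (Finset.univ.erase (aStar i))
          (fun b hb => haux0 i b (Finset.ne_of_mem_erase hb))
        simpa using this
      have h1 : Tendsto (fun n => (1 : ℝ) - ∑ b ∈ Finset.univ.erase (aStar i),
          logit (y n i) b) atTop (nhds 1) := by
        have := Tendsto.sub
          (tendsto_const_nhds : Tendsto (fun _ : ℕ => (1:ℝ)) atTop (nhds 1)) hsum
        simpa using this
      exact h1.congr (fun n => (logit_eq_one_sub (y n i) (aStar i)).symm)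
    · simp only [if_neg h]
      exact haux0 i a h
  · refine ⟨Real.log K + 1, by have := Real.log_nonneg hK1; linarith, ?_⟩
    intro T hT i a
    have h1T : (1 : ℝ) ≤ (T : ℝ) := by exact_mod_cast hT
    have hlogK := Real.log_nonneg hK1
    rcases eq_or_ne a (aStar i) with h | h
    · subst h
      rw [if_pos rfl]
      rw [abs_sub_comm, abs_of_nonneg (by linarith [logit_le_one (y T i) (aStar i)])]
      have hsum : (1 : ℝ) - logit (y T i) (aStar i)
          = ∑ b ∈ Finset.univ.erase (aStar i), logit (y T i) b := by
        rw [logit_eq_one_sub (y T i) (aStar i)]; ring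
      rw [hsum]
      have hbd : ∀ b ∈ Finset.univ.erase (aStar i), logit (y T i) b ≤
          Real.exp (-M - c * γ ^ 2 * (((T : ℝ) - 1) * (T : ℝ)) / 2) := by
        intro b hbm
        have hbne := Finset.ne_of_mem_erase hbm
        have hz := (key T hT i b hbne).1
        calc logit (y T i) b ≤ Real.exp (y T i b - y T i (aStar i)) := logit_le_exp_sub _ _ _
          _ ≤ _ := Real.exp_le_exp.mpr hz
      have hcard : ((Finset.univ.erase (aStar i)).card : ℝ) ≤ K := by
        have h1 : (Finset.univ.erase (aStar i)).card ≤ Fintype.card (A i) :=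
          Finset.card_le_card (Finset.erase_subset _ _)
        calc ((Finset.univ.erase (aStar i)).card : ℝ)
            ≤ (Fintype.card (A i) : ℝ) := by exact_mod_cast h1
          _ ≤ K := hKcard i
      have hKexp : K = Real.exp (Real.log K) := (Real.exp_log (by linarith)).symm
      calc ∑ b ∈ Finset.univ.erase (aStar i), logit (y T i) b
          ≤ ((Finset.univ.erase (aStar i)).card : ℝ) *
              Real.exp (-M - c * γ ^ 2 * (((T : ℝ) - 1) * (T : ℝ)) / 2) := by
            simpa [nsmul_eq_mul] using Finset.sum_le_card_nsmul _ _ _ hbd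
        _ ≤ K * Real.exp (-M - c * γ ^ 2 * (((T : ℝ) - 1) * (T : ℝ)) / 2) :=
            mul_le_mul_of_nonneg_right hcard (Real.exp_pos _).le
        _ = Real.exp (Real.log K + (-M - c * γ ^ 2 * (((T : ℝ) - 1) * (T : ℝ)) / 2)) := by
            rw [Real.exp_add, ← hKexp]
        _ ≤ Real.exp (Real.log K + 1 - c * γ ^ 2 * ((T : ℝ) * ((T : ℝ) - 1)) / 2) := by
            apply Real.exp_le_exp.mpr
            nlinarith
    · simp only [if_neg h, sub_zero]
      rw [abs_of_nonneg (logit_nonneg _ _)]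
      have hz := (key T hT i a h).1
      calc logit (y T i) a ≤ Real.exp (y T i a - y T i (aStar i)) := logit_le_exp_sub _ _ _
        _ ≤ Real.exp (-M - c * γ ^ 2 * (((T : ℝ) - 1) * (T : ℝ)) / 2) :=
            Real.exp_le_exp.mpr hz
        _ ≤ Real.exp (Real.log K + 1 - c * γ ^ 2 * ((T : ℝ) * ((T : ℝ) - 1)) / 2) := by
            apply Real.exp_le_exp.mpr
            nlinarith
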